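/- arXiv:2101.11411 — 6 statements merged into one kernel-verified Lean document; each statement's English description precedes it below -/
import Mathlib

section
/- Let M : ℕ → ℝ be a weight sequence in the class LC. Then the following are equivalent: (i) M has moderate growth (mg); (ii) there exists A ≥ 1 such that M_{2p} ≤ A^{2p}·(M_p)² for all p ∈ ℕ; (iii) sup_{p ∈ ℕ, p ≥ 1} μ_{2p}/μ_p < +∞; (iv) there exists A ≥ 1 such that μ_p ≤ A·(M_p)^{1/p} for all p ≥ 1. -/
open Filter Real Asymptotics

/-- The associated weight function of a weight sequence `M`. -/
noncomputable def omegaM (M : ℕ → ℝ) (t : ℝ) : ℝ :=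
  if t = 0 then 0 else ⨆ p : ℕ, Real.log (t ^ p / M p)

/-- The class `LC`: positive, normalized, log-convex weight sequences whose
`p`-th roots tend to infinity. -/
def IsLC (M : ℕ → ℝ) : Prop :=
  (∀ p, 0 < M p) ∧ M 0 = 1 ∧ M 0 ≤ M 1 ∧
  (∀ p : ℕ, 1 ≤ p → (M p) ^ 2 ≤ M (p - 1) * M (p + 1)) ∧
  Filter.Tendsto (fun p : ℕ => (M p) ^ (1 / (p : ℝ))) Filter.atTop Filter.atTop

/-- The quotient sequence `μ_0 = 1`, `μ_p = M_p / M_{p-1}`. -/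
noncomputable def mu (M : ℕ → ℝ) (p : ℕ) : ℝ :=
  if p = 0 then 1 else M p / M (p - 1)

/-- Moderate growth `(mg)`. -/
def HasMG (M : ℕ → ℝ) : Prop :=
  ∃ C : ℝ, 1 ≤ C ∧ ∀ p q : ℕ, M (p + q) ≤ C ^ (p + q) * M p * M q

/-- `m_p := M_p / p!`. -/
noncomputable def mseq (M : ℕ → ℝ) (p : ℕ) : ℝ := M p / (Nat.factorial p)

/-- Young conjugate of `x ↦ ω_M(eˣ)`. -/
noncomputable def phiStar (M : ℕ → ℝ) (y : ℝ) : ℝ :=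
  sSup ((fun x => x * y - omegaM M (Real.exp x)) '' Set.Ici (0 : ℝ))

/-- The weight matrix associated with `ω_M`: `M^{(l)}_p := exp((1/l)·φ*(l·p))`. -/
noncomputable def MMat (M : ℕ → ℝ) (l : ℝ) (p : ℕ) : ℝ :=
  Real.exp ((1 / l) * phiStar M (l * p))

/-- `m^{(l)}_p := M^{(l)}_p / p!`. -/
noncomputable def mMat (M : ℕ → ℝ) (l : ℝ) (p : ℕ) : ℝ :=
  MMat M l p / (Nat.factorial p)

/-- The Roumieu root-almost-increasing condition `(M_{rai})` for the weight matrix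
associated with `ω_M`. -/
def MRai (M : ℕ → ℝ) : Prop :=
  ∀ x : ℝ, 0 < x → ∃ C : ℝ, 0 < C ∧ ∃ y : ℝ, 0 < y ∧
    ∀ p q : ℕ, 1 ≤ p → p ≤ q →
      (mMat M x p) ^ (1 / (p : ℝ)) ≤ C * (mMat M y q) ^ (1 / (q : ℝ))

/-- `M ≼ N` : `sup_{p ≥ 1} (M_p/N_p)^{1/p} < ∞`. -/
def Precsim (M N : ℕ → ℝ) : Prop :=
  ∃ A : ℝ, ∀ p : ℕ, 1 ≤ p → (M p / N p) ^ (1 / (p : ℝ)) ≤ A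

/-- `M ≈ N` : mutual `≼`. -/
def Approx (M N : ℕ → ℝ) : Prop := Precsim M N ∧ Precsim N M

/-- Condition `(ω1)` for a weight function. -/
def Omega1 (w : ℝ → ℝ) : Prop :=
  ∃ L : ℝ, 1 ≤ L ∧ ∀ t : ℝ, 0 ≤ t → w (2 * t) ≤ L * (w t + 1)

/-- Condition `(α0)` (in the rewritten form valid for all `t ≥ 0`). -/
def Alpha0 (w : ℝ → ℝ) : Prop :=
  ∃ C : ℝ, 1 ≤ C ∧ ∃ D : ℝ, 1 ≤ D ∧ ∀ lam : ℝ, 1 ≤ lam → ∀ t : ℝ, 0 ≤ t →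
    w (lam * t) ≤ C * lam * w t + D * lam

/-!
For a positive log-convex sequence the quotients `μ_p` increase, so `M_{p+q}` is squeezed
between `M_p μ_p^q` and `M_p μ_{p+q}^q`. Everything follows from these two bounds:
they give `M_{p+q}² ≤ M_{2p} M_{2q}`, which reduces `(mg)` to its diagonal case `(ii)`, and they
bound `μ_p^p` by `M_{2p}/M_p`, which translates `(ii)` into `(iv)` and, applied at `2p`, into
`(iii)`. Conversely `(iii)` gives `(ii)` by induction, since `M_{2p+2} = M_{2p} μ_{2p+1} μ_{2p+2}`.
-/

lemma le_mul_rpow_one_div_iff {x y A : ℝ} {n : ℕ} (hx : 0 ≤ x) (hy : 0 ≤ y) (hA : 0 ≤ A)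
    (hn : n ≠ 0) : x ≤ A * y ^ (1 / (n : ℝ)) ↔ x ^ n ≤ A ^ n * y := by
  rw [← pow_le_pow_iff_left₀ hx (by positivity) hn, mul_pow, one_div,
    Real.rpow_inv_natCast_pow hy hn]

section QuotientSequence

variable {M : ℕ → ℝ}

lemma mu_succ (n : ℕ) : mu M (n + 1) = M (n + 1) / M n := by
  simp [mu]

lemma mu_pos (hpos : ∀ p, 0 < M p) (p : ℕ) : 0 < mu M p := by
  cases p with
  | zero => simp [mu]
  | succ n => rw [mu_succ]; exact div_pos (hpos _) (hpos _)

lemma mul_mu_succ (hpos : ∀ p, 0 < M p) (n : ℕ) : M n * mu M (n + 1) = M (n + 1) := by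
  rw [mu_succ, mul_div_cancel₀ _ (hpos n).ne']

lemma monotone_mu (hpos : ∀ p, 0 < M p) (h01 : M 0 ≤ M 1)
    (hconv : ∀ p : ℕ, 1 ≤ p → M p ^ 2 ≤ M (p - 1) * M (p + 1)) : Monotone (mu M) := by
  refine monotone_nat_of_le_succ fun n => ?_
  cases n with
  | zero => simpa [mu, one_le_div (hpos 0)] using h01
  | succ n =>
    have h := hconv (n + 1) n.succ_pos
    rw [Nat.add_sub_cancel] at h
    rw [mu_succ, mu_succ, div_le_div_iff₀ (hpos _) (hpos _)]
    nlinarith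

variable (hpos : ∀ p, 0 < M p) (hmono : Monotone (mu M))
include hpos hmono

lemma le_mul_mu_pow (p q : ℕ) : M (p + q) ≤ M p * mu M (p + q) ^ q := by
  induction q with
  | zero => simp
  | succ q ih =>
    rw [← add_assoc, ← mul_mu_succ hpos, pow_succ, ← mul_assoc]
    refine mul_le_mul_of_nonneg_right (ih.trans ?_) (mu_pos hpos _).le
    exact mul_le_mul_of_nonneg_left
      (pow_le_pow_left₀ (mu_pos hpos _).le (hmono (Nat.le_succ _)) q) (hpos p).le

lemma mul_mu_pow_le (p q : ℕ) : M p * mu M p ^ q ≤ M (p + q) := by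
  induction q with
  | zero => simp
  | succ q ih =>
    rw [← add_assoc, ← mul_mu_succ hpos, pow_succ, ← mul_assoc]
    exact mul_le_mul ih (hmono (by omega)) (mu_pos hpos _).le (hpos _).le

lemma sq_le_mul_add_two_mul (a k : ℕ) : M (a + k) ^ 2 ≤ M a * M (a + 2 * k) := by
  have hlow := mul_mu_pow_le hpos hmono (a + k) k
  rw [add_assoc, ← two_mul] at hlow
  calc M (a + k) ^ 2 = M (a + k) * M (a + k) := sq _
    _ ≤ M a * mu M (a + k) ^ k * M (a + k) :=
        mul_le_mul_of_nonneg_right (le_mul_mu_pow hpos hmono a k) (hpos _).le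
    _ = M a * (M (a + k) * mu M (a + k) ^ k) := by ring
    _ ≤ M a * M (a + 2 * k) := mul_le_mul_of_nonneg_left hlow (hpos _).le

lemma sq_add_le_mul_two_mul (p q : ℕ) : M (p + q) ^ 2 ≤ M (2 * p) * M (2 * q) := by
  wlog hpq : p ≤ q generalizing p q
  · rw [add_comm, mul_comm]
    exact this q p (le_of_not_ge hpq)
  obtain ⟨k, rfl⟩ := Nat.exists_eq_add_of_le hpq
  convert sq_le_mul_add_two_mul hpos hmono (2 * p) k using 3 <;> ring

lemma hasMG_of_two_mul_le {A : ℝ} (hA1 : 1 ≤ A)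
    (hA : ∀ p : ℕ, M (2 * p) ≤ A ^ (2 * p) * M p ^ 2) : HasMG M := by
  refine ⟨A, hA1, fun p q => ?_⟩
  have hA0 : 0 ≤ A := zero_le_one.trans hA1
  refine (pow_le_pow_iff_left₀ (hpos _).le ?_ two_ne_zero).mp ?_
  · exact mul_nonneg (mul_nonneg (pow_nonneg hA0 _) (hpos p).le) (hpos q).le
  calc M (p + q) ^ 2 ≤ M (2 * p) * M (2 * q) := sq_add_le_mul_two_mul hpos hmono p q
    _ ≤ (A ^ (2 * p) * M p ^ 2) * (A ^ (2 * q) * M q ^ 2) :=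
        mul_le_mul (hA p) (hA q) (hpos _).le (by positivity)
    _ = (A ^ (p + q) * M p * M q) ^ 2 := by ring

lemma mu_pow_le_of_two_mul_le {A : ℝ} (hA : ∀ p : ℕ, M (2 * p) ≤ A ^ (2 * p) * M p ^ 2)
    (p : ℕ) : mu M p ^ p ≤ (A ^ 2) ^ p * M p := by
  refine le_of_mul_le_mul_left ?_ (hpos p)
  calc M p * mu M p ^ p ≤ M (2 * p) := two_mul p ▸ mul_mu_pow_le hpos hmono p p
    _ ≤ A ^ (2 * p) * M p ^ 2 := hA p
    _ = M p * ((A ^ 2) ^ p * M p) := by ring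

lemma two_mul_le_of_mu_pow_le (h0 : M 0 = 1) {A : ℝ}
    (hA : ∀ p : ℕ, 1 ≤ p → mu M p ^ p ≤ A ^ p * M p) (p : ℕ) :
    M (2 * p) ≤ A ^ (2 * p) * M p ^ 2 := by
  rcases Nat.eq_zero_or_pos p with rfl | hp
  · simp [h0]
  refine le_of_mul_le_mul_right ?_ (hpos (2 * p))
  calc M (2 * p) * M (2 * p) ≤ (M p * mu M (2 * p) ^ p) ^ 2 := by
        rw [← sq]
        exact pow_le_pow_left₀ (hpos _).le (two_mul p ▸ le_mul_mu_pow hpos hmono p p) 2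
    _ = M p ^ 2 * mu M (2 * p) ^ (2 * p) := by ring
    _ ≤ M p ^ 2 * (A ^ (2 * p) * M (2 * p)) :=
        mul_le_mul_of_nonneg_left (hA (2 * p) (by omega)) (by positivity)
    _ = A ^ (2 * p) * M p ^ 2 * M (2 * p) := by ring

lemma mu_two_mul_le_of_two_mul_le (h0 : M 0 = 1) {A : ℝ} (hA1 : 1 ≤ A)
    (hA : ∀ p : ℕ, M (2 * p) ≤ A ^ (2 * p) * M p ^ 2) (p : ℕ) (hp : 1 ≤ p) :
    mu M (2 * p) ≤ A ^ 3 * mu M p := by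
  have hA0 : 0 ≤ A := zero_le_one.trans hA1
  have hMp : M p ≤ mu M p ^ p := by
    simpa [h0] using le_mul_mu_pow hpos hmono 0 p
  have hμp := (mu_pos hpos p).le
  have hMp0 := (hpos p).le
  refine (pow_le_pow_iff_left₀ (mu_pos hpos _).le (by positivity) (n := 2 * p)
    (by omega)).mp ?_
  calc mu M (2 * p) ^ (2 * p) ≤ (A ^ 2) ^ (2 * p) * M (2 * p) :=
        mu_pow_le_of_two_mul_le hpos hmono hA (2 * p)
    _ ≤ (A ^ 2) ^ (2 * p) * (A ^ (2 * p) * (mu M p ^ p) ^ 2) := by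
        gcongr
        exact (hA p).trans (by gcongr)
    _ = (A ^ 3 * mu M p) ^ (2 * p) := by ring

lemma two_mul_le_of_mu_two_mul_le (h0 : M 0 = 1) {A : ℝ} (hA0 : 0 ≤ A)
    (hA : ∀ p : ℕ, 1 ≤ p → mu M (2 * p) ≤ A * mu M p) (p : ℕ) :
    M (2 * p) ≤ A ^ (2 * p) * M p ^ 2 := by
  induction p with
  | zero => simp [h0]
  | succ p ih =>
    have hμ : mu M (2 * p + 2) ≤ A * mu M (p + 1) := hA (p + 1) (by omega)
    have hμ' : mu M (2 * p + 1) ≤ A * mu M (p + 1) := (hmono (by omega)).trans hμ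
    rw [show 2 * (p + 1) = 2 * p + 1 + 1 by ring, ← mul_mu_succ hpos, ← mul_mu_succ hpos,
      ← mul_mu_succ hpos p]
    calc M (2 * p) * mu M (2 * p + 1) * mu M (2 * p + 1 + 1)
        ≤ A ^ (2 * p) * M p ^ 2 * (A * mu M (p + 1)) * (A * mu M (p + 1)) := by
          have hμ₁ := mu_pos hpos (2 * p + 1)
          have hμ₂ := mu_pos hpos (2 * p + 1 + 1)
          have hμp := mu_pos hpos (p + 1)
          gcongr
      _ = A ^ (2 * p + 1 + 1) * (M p * mu M (p + 1)) ^ 2 := by ring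

end QuotientSequence

/-- Lemma 2.1: equivalent reformulations of moderate growth. -/
theorem stmt0 (M : ℕ → ℝ) (hM : IsLC M) :
    List.TFAE [
      HasMG M,
      ∃ A : ℝ, 1 ≤ A ∧ ∀ p : ℕ, M (2 * p) ≤ A ^ (2 * p) * (M p) ^ 2,
      ∃ S : ℝ, ∀ p : ℕ, 1 ≤ p → mu M (2 * p) / mu M p ≤ S,
      ∃ A : ℝ, 1 ≤ A ∧ ∀ p : ℕ, 1 ≤ p → mu M p ≤ A * (M p) ^ (1 / (p : ℝ))] := by
  obtain ⟨hpos, h0, h01, hconv, -⟩ := hM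
  have hmono := monotone_mu hpos h01 hconv
  have hroot {A : ℝ} (hA : 0 ≤ A) {p : ℕ} (hp : 1 ≤ p) :
      mu M p ≤ A * M p ^ (1 / (p : ℝ)) ↔ mu M p ^ p ≤ A ^ p * M p :=
    le_mul_rpow_one_div_iff (mu_pos hpos p).le (hpos p).le hA (Nat.one_le_iff_ne_zero.mp hp)
  tfae_have 1 → 2
  | ⟨C, hC1, hC⟩ => ⟨C, hC1, fun p => by simpa [two_mul, mul_assoc, sq] using hC p p⟩
  tfae_have 2 → 1
  | ⟨A, hA1, hA⟩ => hasMG_of_two_mul_le hpos hmono hA1 hA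
  tfae_have 2 → 3
  | ⟨A, hA1, hA⟩ => ⟨A ^ 3, fun p hp => (div_le_iff₀ (mu_pos hpos p)).mpr
      (mu_two_mul_le_of_two_mul_le hpos hmono h0 hA1 hA p hp)⟩
  tfae_have 3 → 2
  | ⟨S, hS⟩ => ⟨max S 1, le_max_right _ _, two_mul_le_of_mu_two_mul_le hpos hmono h0
      (zero_le_one.trans (le_max_right _ _)) fun p hp => (div_le_iff₀ (mu_pos hpos p)).mp
        ((hS p hp).trans (le_max_left _ _))⟩
  tfae_have 2 → 4
  | ⟨A, hA1, hA⟩ => ⟨A ^ 2, one_le_pow₀ hA1, fun p hp =>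
      (hroot (by positivity) hp).mpr (mu_pow_le_of_two_mul_le hpos hmono hA p)⟩
  tfae_have 4 → 2
  | ⟨A, hA1, hA⟩ => ⟨A, hA1, two_mul_le_of_mu_pow_le hpos hmono h0 fun p hp =>
      (hroot (zero_le_one.trans hA1) hp).mp (hA p hp)⟩
  tfae_finish
end

section
/- Let N : ℕ → ℝ be a weight sequence in the class LC and let C ≥ 2 be an integer. Then L^C ≼ N, i.e. there exists A ≥ 1 such that (N_{Cp})^{1/C} ≤ A^p·N_p for all p ≥ 1, holds if and only if N has moderate growth (mg). Consequently, N ≈ L^C for some (equivalently every) integer C ≥ 2 if and only if N has (mg). -/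
open Filter Real Asymptotics

/-!
Writing `N_p = exp f(p)`, log-convexity with `N_0 = 1` makes `f` convex with `f(0) = 0`, so
`N_p ^ (1/p)` increases and `N_{p+q}^2 ≤ N_{2p} N_{2q}`. If `N_{Cp} ≤ (A^p N_p)^C`, the first fact
(from `2p` to `Cp`) gives `N_{2p} ≤ (A^p N_p)^2`, and the second then gives `(mg)` with constant `A`.
Conversely, iterating `(mg)` gives `N_{kp} ≤ B^{k^2 p} N_p^k`. Since `N ≼ L^C` always holds by the
monotonicity of `N_p ^ (1/p)`, `N ≈ L^C` reduces to `L^C ≼ N`.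
-/

open Finset

namespace Monotone

variable {d : ℕ → ℝ}

theorem sum_range_le_mul (hd : Monotone d) (a : ℕ) : ∑ k ∈ range a, d k ≤ a * d a := by
  simpa using sum_le_sum fun k hk => hd (mem_range.mp hk).le

theorem mul_le_sum_Ico (hd : Monotone d) {a b : ℕ} (hab : a ≤ b) :
    ((b : ℝ) - a) * d a ≤ ∑ k ∈ Ico a b, d k := by
  calc ((b : ℝ) - a) * d a = ∑ _k ∈ Ico a b, d a := by simp [Nat.cast_sub hab]
    _ ≤ ∑ k ∈ Ico a b, d k := sum_le_sum fun k hk => hd (mem_Ico.mp hk).1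

/-- The averages of a monotone sequence increase. -/
theorem mul_sum_range_le_mul_sum_range (hd : Monotone d) {a b : ℕ} (hab : a ≤ b) :
    (b : ℝ) * ∑ k ∈ range a, d k ≤ a * ∑ k ∈ range b, d k := by
  have hba : (0 : ℝ) ≤ b - a := sub_nonneg.2 (Nat.cast_le.2 hab)
  rw [← sum_range_add_sum_Ico d hab]
  nlinarith [mul_le_mul_of_nonneg_left (hd.sum_range_le_mul a) hba,
    mul_le_mul_of_nonneg_left (hd.mul_le_sum_Ico hab) (Nat.cast_nonneg a : (0 : ℝ) ≤ a)]

theorem two_mul_sum_range_add_le (hd : Monotone d) {p q : ℕ} (hpq : p ≤ q) :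
    2 * ∑ k ∈ range (p + q), d k ≤ ∑ k ∈ range (2 * p), d k + ∑ k ∈ range (2 * q), d k := by
  have hle : ∑ k ∈ Ico (2 * p) (p + q), d k ≤ ∑ k ∈ Ico (p + q) (2 * q), d k := by
    rw [sum_Ico_eq_sum_range, sum_Ico_eq_sum_range, show p + q - 2 * p = 2 * q - (p + q) by omega]
    exact sum_le_sum fun i _ => hd (by omega)
  rw [sum_Ico_eq_sub _ (by omega), sum_Ico_eq_sub _ (by omega)] at hle
  linarith

end Monotone

theorem rpow_one_div_natCast_le_iff {x y : ℝ} {n : ℕ} (hx : 0 ≤ x) (hy : 0 ≤ y) (hn : n ≠ 0) :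
    x ^ (1 / (n : ℝ)) ≤ y ↔ x ≤ y ^ n := by
  rw [one_div, Real.rpow_inv_le_iff_of_pos hx hy (by positivity), Real.rpow_natCast]

theorem precsim_iff_exists_le_pow_mul {M N : ℕ → ℝ} (hM : ∀ p, 0 ≤ M p) (hN : ∀ p, 0 < N p) :
    Precsim M N ↔ ∃ A : ℝ, 1 ≤ A ∧ ∀ p : ℕ, 1 ≤ p → M p ≤ A ^ p * N p := by
  have key : ∀ {A : ℝ} {p : ℕ}, 0 ≤ A → 1 ≤ p →
      ((M p / N p) ^ (1 / (p : ℝ)) ≤ A ↔ M p ≤ A ^ p * N p) := fun {A p} hA hp => by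
    rw [rpow_one_div_natCast_le_iff (div_nonneg (hM p) (hN p).le) hA (by omega), div_le_iff₀ (hN p)]
  constructor
  · rintro ⟨A, hA⟩
    exact ⟨max A 1, le_max_right A 1, fun p hp =>
      (key (zero_le_one.trans (le_max_right A 1)) hp).1 ((hA p hp).trans (le_max_left A 1))⟩
  · rintro ⟨A, hA, h⟩
    exact ⟨A, fun p hp => (key (zero_le_one.trans hA) hp).2 (h p hp)⟩

theorem apply_mul_le_of_moderateGrowth {N : ℕ → ℝ} {B : ℝ} (hB : 1 ≤ B)
    (hmg : ∀ p q : ℕ, N (p + q) ≤ B ^ (p + q) * N p * N q) (hN : ∀ p, 0 ≤ N p)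
    {k : ℕ} (hk : 1 ≤ k) (p : ℕ) : N (k * p) ≤ B ^ (k * k * p) * N p ^ k := by
  induction k, hk using Nat.le_induction with
  | base => simpa using le_mul_of_one_le_left (hN p) (one_le_pow₀ hB)
  | succ k _ ih =>
    have hNp := hN p
    have hexp : B ^ ((k + 1) * p) * B ^ (k * k * p) ≤ B ^ ((k + 1) * (k + 1) * p) := by
      rw [← pow_add]
      exact pow_le_pow_right₀ hB (by nlinarith)
    calc N ((k + 1) * p) = N (k * p + p) := by rw [add_mul, one_mul]
      _ ≤ B ^ ((k + 1) * p) * N (k * p) * N p := by rw [add_one_mul k p]; exact hmg _ _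
      _ ≤ B ^ ((k + 1) * p) * (B ^ (k * k * p) * N p ^ k) * N p := by gcongr
      _ = B ^ ((k + 1) * p) * B ^ (k * k * p) * N p ^ (k + 1) := by ring
      _ ≤ B ^ ((k + 1) * (k + 1) * p) * N p ^ (k + 1) := by gcongr

namespace IsLC

open Real

variable {N : ℕ → ℝ}

theorem monotone_log_sub (hN : IsLC N) : Monotone fun k => log (N (k + 1)) - log (N k) := by
  refine monotone_nat_of_le_succ fun k => ?_
  have h := hN.2.2.2.1 (k + 1) (by omega)
  rw [Nat.add_sub_cancel, ← log_le_log_iff (pow_pos (hN.1 _) 2) (mul_pos (hN.1 _) (hN.1 _)),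
    log_pow, log_mul (hN.1 _).ne' (hN.1 _).ne'] at h
  push_cast at h
  linarith

theorem log_eq_sum (hN : IsLC N) (p : ℕ) :
    log (N p) = ∑ k ∈ range p, (log (N (k + 1)) - log (N k)) := by
  rw [sum_range_sub (fun k => log (N k)), hN.2.1, log_one, sub_zero]

/-- `p ↦ N_p ^ (1/p)` is increasing. -/
theorem pow_le_pow_of_le (hN : IsLC N) {a b : ℕ} (hab : a ≤ b) : N a ^ b ≤ N b ^ a := by
  rw [← log_le_log_iff (pow_pos (hN.1 a) b) (pow_pos (hN.1 b) a), log_pow, log_pow,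
    hN.log_eq_sum a, hN.log_eq_sum b]
  exact hN.monotone_log_sub.mul_sum_range_le_mul_sum_range hab

theorem sq_apply_add_le_mul (hN : IsLC N) (p q : ℕ) : N (p + q) ^ 2 ≤ N (2 * p) * N (2 * q) := by
  wlog hpq : p ≤ q generalizing p q
  · simpa only [add_comm, mul_comm (N (2 * q))] using this q p (by omega)
  rw [← log_le_log_iff (pow_pos (hN.1 _) 2) (mul_pos (hN.1 _) (hN.1 _)), log_pow,
    log_mul (hN.1 _).ne' (hN.1 _).ne', hN.log_eq_sum (p + q), hN.log_eq_sum (2 * p),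
    hN.log_eq_sum (2 * q)]
  exact_mod_cast hN.monotone_log_sub.two_mul_sum_range_add_le hpq

theorem pow_le_apply_mul (hN : IsLC N) {k p : ℕ} (hk : k ≠ 0) (hp : p ≠ 0) :
    N p ^ k ≤ N (k * p) := by
  rw [← pow_le_pow_iff_left₀ (pow_pos (hN.1 p) k).le (hN.1 _).le hp, ← pow_mul]
  exact hN.pow_le_pow_of_le (Nat.le_mul_of_pos_left p (Nat.pos_of_ne_zero hk))

theorem hasMG_of_apply_mul_le (hN : IsLC N) {C : ℕ} (hC : 2 ≤ C) {A : ℝ} (hA : 1 ≤ A)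
    (h : ∀ p : ℕ, 1 ≤ p → N (C * p) ≤ (A ^ p * N p) ^ C) : HasMG N := by
  have hAN : ∀ p, 0 ≤ A ^ p * N p := fun p => by have := hN.1 p; positivity
  have h2 : ∀ p, N (2 * p) ≤ (A ^ p * N p) ^ 2 := by
    intro p
    rcases Nat.eq_zero_or_pos p with rfl | hp
    · simp [hN.2.1]
    rw [← pow_le_pow_iff_left₀ (hN.1 _).le (pow_nonneg (hAN p) 2) (by positivity : C * p ≠ 0)]
    calc N (2 * p) ^ (C * p) ≤ N (C * p) ^ (2 * p) := hN.pow_le_pow_of_le (by gcongr)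
      _ ≤ ((A ^ p * N p) ^ C) ^ (2 * p) := pow_le_pow_left₀ (hN.1 _).le (h p hp) _
      _ = ((A ^ p * N p) ^ 2) ^ (C * p) := by ring
  refine ⟨A, hA, fun p q => ?_⟩
  rw [← pow_le_pow_iff_left₀ (hN.1 _).le (by have := hN.1 p; have := hN.1 q; positivity) two_ne_zero]
  calc N (p + q) ^ 2 ≤ N (2 * p) * N (2 * q) := hN.sq_apply_add_le_mul p q
    _ ≤ (A ^ p * N p) ^ 2 * (A ^ q * N q) ^ 2 :=
        mul_le_mul (h2 p) (h2 q) (hN.1 _).le (pow_nonneg (hAN p) 2)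
    _ = (A ^ (p + q) * N p * N q) ^ 2 := by ring

end IsLC

/-- Lemma 2.2 (ii): `L^C ≼ N` iff `(mg)`; consequently `N ≈ L^C` iff `(mg)`. -/
theorem stmt2 (N : ℕ → ℝ) (hN : IsLC N) (C : ℕ) (hC : 2 ≤ C) :
    ((∃ A : ℝ, 1 ≤ A ∧ ∀ p : ℕ, 1 ≤ p →
        (N (C * p)) ^ (1 / (C : ℝ)) ≤ A ^ p * N p) ↔ HasMG N) ∧
    (Approx N (fun p => (N (C * p)) ^ (1 / (C : ℝ))) ↔ HasMG N) := by
  have hpos := hN.1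
  have hC0 : C ≠ 0 := by omega
  have hroot : ∀ p, 0 < N (C * p) ^ (1 / (C : ℝ)) := fun p => Real.rpow_pos_of_pos (hpos _) _
  have hroot_le : ∀ {A : ℝ} {p : ℕ}, 1 ≤ A →
      (N (C * p) ^ (1 / (C : ℝ)) ≤ A ^ p * N p ↔ N (C * p) ≤ (A ^ p * N p) ^ C) :=
    fun {A p} hA => rpow_one_div_natCast_le_iff (hpos _).le
      (mul_nonneg (pow_nonneg (zero_le_one.trans hA) p) (hpos p).le) hC0
  have key : (∃ A : ℝ, 1 ≤ A ∧ ∀ p : ℕ, 1 ≤ p →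
      N (C * p) ^ (1 / (C : ℝ)) ≤ A ^ p * N p) ↔ HasMG N := by
    constructor
    · rintro ⟨A, hA, h⟩
      exact hN.hasMG_of_apply_mul_le hC hA fun p hp => (hroot_le hA).1 (h p hp)
    · rintro ⟨B, hB, hmg⟩
      refine ⟨B ^ C, one_le_pow₀ hB, fun p _ => (hroot_le (one_le_pow₀ hB)).2 ?_⟩
      calc N (C * p) ≤ B ^ (C * C * p) * N p ^ C :=
            apply_mul_le_of_moderateGrowth hB hmg (fun p => (hpos p).le) (by omega) p
        _ = ((B ^ C) ^ p * N p) ^ C := by ring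
  refine ⟨key, ?_⟩
  have hNL : Precsim N fun p => N (C * p) ^ (1 / (C : ℝ)) :=
    (precsim_iff_exists_le_pow_mul (fun p => (hpos p).le) hroot).2 ⟨1, le_rfl, fun p hp => by
      rw [one_pow, one_mul, one_div, Real.le_rpow_inv_iff_of_pos (hpos p).le (hpos _).le
        (by positivity), Real.rpow_natCast]
      exact hN.pow_le_apply_mul hC0 (by omega)⟩
  rw [Approx, and_iff_right hNL, precsim_iff_exists_le_pow_mul (fun p => (hroot p).le) hpos, key]
end

section
/- Let M : ℕ → ℝ be a weight sequence in the class LC. Then for every p ∈ ℕ one has exp( sup_{y ≥ 0} ( p·y − ω_M(e^y) ) ) = M_p; that is, the first sequence M^{(1)} of the weight matrix associated with ω_M coincides with M. -/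
open Filter Real Asymptotics

/-!
Writing `L q = log M_q`, one has `ω_M(e^y) = sup_q (q y - L q)`, the discrete Legendre transform
of `L`, so the claim is that `L` equals its Legendre biconjugate at `p`. Log-convexity makes the
increments `L (q+1) - L q` nondecreasing, hence the line of slope `y₀ = L (p+1) - L p` through
`(p, L p)` lies below the graph of `L`; at `y = y₀` the supremum defining `ω_M(e^y)` is attained
at `q = p`, and `y₀ ≥ 0` because `M_0 ≤ M_1`.
-/

open Set

section LegendreOfConvexSequence

variable {L : ℕ → ℝ}

lemma tangent_le_of_monotone_succ_sub (hL : Monotone fun q => L (q + 1) - L q) (p q : ℕ) :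
    L p + ((q : ℝ) - p) * (L (p + 1) - L p) ≤ L q := by
  rcases le_total p q with hpq | hqp
  · induction q, hpq using Nat.le_induction with
    | base => simp
    | succ k hpk ih =>
      have := hL hpk
      push_cast
      linarith
  · induction hqp using Nat.decreasingInduction with
    | self => simp
    | of_succ k hkp ih =>
      have := hL hkp.le
      push_cast at ih
      linarith

lemma isGreatest_mul_sub_iSup_of_monotone_succ_sub (hL : Monotone fun q => L (q + 1) - L q)
    (hbdd : ∀ y : ℝ, BddAbove (range fun q : ℕ => (q : ℝ) * y - L q))
    (p : ℕ) (hp : 0 ≤ L (p + 1) - L p) :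
    IsGreatest ((fun y : ℝ => (p : ℝ) * y - ⨆ q : ℕ, ((q : ℝ) * y - L q)) '' Ici 0) (L p) := by
  refine ⟨⟨L (p + 1) - L p, hp, ?_⟩, ?_⟩
  · have hsup : (⨆ q : ℕ, ((q : ℝ) * (L (p + 1) - L p) - L q))
        = (p : ℝ) * (L (p + 1) - L p) - L p := by
      refine le_antisymm (ciSup_le fun q => ?_) (le_ciSup (hbdd _) p)
      linarith [tangent_le_of_monotone_succ_sub hL p q]
    simp only [hsup]
    ring
  · rintro _ ⟨y, -, rfl⟩
    linarith [le_ciSup (hbdd y) p]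

end LegendreOfConvexSequence

lemma omegaM_exp {M : ℕ → ℝ} (hpos : ∀ q, 0 < M q) (y : ℝ) :
    omegaM M (exp y) = ⨆ q : ℕ, ((q : ℝ) * y - log (M q)) := by
  rw [omegaM, if_neg (exp_ne_zero y)]
  congr 1 with q
  rw [log_div (pow_ne_zero _ (exp_ne_zero y)) (hpos q).ne', log_pow, log_exp]

namespace IsLC

variable {M : ℕ → ℝ} (hM : IsLC M)
include hM

lemma monotone_log_succ_sub : Monotone fun q => log (M (q + 1)) - log (M q) := by
  obtain ⟨hpos, -, -, hconv, -⟩ := hM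
  refine monotone_nat_of_le_succ fun q => ?_
  have h := log_le_log (pow_pos (hpos _) 2) (hconv (q + 1) q.succ_pos)
  rw [log_pow, Nat.add_sub_cancel, log_mul (hpos q).ne' (hpos (q + 2)).ne'] at h
  push_cast at h
  linarith

lemma log_succ_sub_nonneg (p : ℕ) : 0 ≤ log (M (p + 1)) - log (M p) := by
  have h : log (M 0) ≤ log (M 1) := log_le_log (hM.1 0) hM.2.2.1
  exact (sub_nonneg.2 h).trans (hM.monotone_log_succ_sub p.zero_le)

lemma bddAbove_range_mul_sub_log (y : ℝ) :
    BddAbove (range fun q : ℕ => (q : ℝ) * y - log (M q)) := by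
  obtain ⟨hpos, -, -, -, htend⟩ := hM
  refine (isBoundedUnder_of_eventually_le (a := 0) ?_).bddAbove_range
  filter_upwards [htend.eventually_ge_atTop (exp y), eventually_ge_atTop 1] with q hq hq1
  have hq0 : (0 : ℝ) < q := by exact_mod_cast hq1
  rw [← le_log_iff_exp_le (rpow_pos_of_pos (hpos q) _), log_rpow (hpos q),
    one_div, inv_mul_eq_div, le_div_iff₀ hq0] at hq
  linarith

end IsLC

/-- Equation (2.9): `M^{(1)}_p = exp(φ*_{ω_M}(p)) = M_p`. -/
theorem stmt4 (M : ℕ → ℝ) (hM : IsLC M) (p : ℕ) :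
    Real.exp (sSup ((fun y : ℝ => (p : ℝ) * y - omegaM M (Real.exp y)) ''
      Set.Ici (0 : ℝ))) = M p := by
  simp only [omegaM_exp hM.1]
  rw [(isGreatest_mul_sub_iSup_of_monotone_succ_sub hM.monotone_log_succ_sub
    hM.bddAbove_range_mul_sub_log p (hM.log_succ_sub_nonneg p)).csSup_eq, exp_log (hM.1 p)]
end

section
/- Let M, N : ℕ → ℝ be weight sequences in the class LC with M ≈ N. If the associated weight function ω_M satisfies (ω1), then ω_N also satisfies (ω1). -/
open Filter Real Asymptotics

/-
`M ≼ N` means `M_p ≤ A^p N_p`, which gives `ω_N(t) ≤ ω_M(A t)` termwise in the supremum.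
So `M ≈ N` makes `ω_M` and `ω_N` comparable up to dilations of the argument, and `(ω1)`
survives such a comparison: iterating it `k` times with `2^k ≥ 2AB` absorbs both dilations.
-/

section WeightFunction

variable {M N : ℕ → ℝ}

lemma bddAbove_range_log_pow_div (hpos : ∀ p, 0 < M p)
    (hlim : Tendsto (fun p : ℕ => M p ^ (1 / (p : ℝ))) atTop atTop) {t : ℝ} (ht : 0 < t) :
    BddAbove (Set.range fun p : ℕ => log (t ^ p / M p)) := by
  refine (isBoundedUnder_of_eventually_le (a := 0) ?_).bddAbove_range
  filter_upwards [hlim.eventually_ge_atTop t, eventually_ne_atTop 0] with p hp hp0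
  have hle : t ^ p ≤ M p := by
    calc t ^ p ≤ (M p ^ (1 / (p : ℝ))) ^ p := pow_le_pow_left₀ ht.le hp p
      _ = M p := by rw [one_div, rpow_inv_natCast_pow (hpos p).le hp0]
  exact log_nonpos (div_pos (pow_pos ht p) (hpos p)).le ((div_le_one (hpos p)).2 hle)

lemma omegaM_nonneg (hpos : ∀ p, 0 < M p)
    (hlim : Tendsto (fun p : ℕ => M p ^ (1 / (p : ℝ))) atTop atTop) (h0 : M 0 ≤ 1)
    {t : ℝ} (ht : 0 ≤ t) : 0 ≤ omegaM M t := by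
  rcases ht.eq_or_lt with rfl | ht
  · simp [omegaM]
  rw [omegaM, if_neg ht.ne']
  calc (0 : ℝ) ≤ log (t ^ 0 / M 0) := by
        rw [pow_zero, one_div]; exact log_nonneg (one_le_inv_iff₀.2 ⟨hpos 0, h0⟩)
    _ ≤ _ := le_ciSup (bddAbove_range_log_pow_div hpos hlim ht) 0

lemma omegaM_le_omegaM_mul (hMpos : ∀ p, 0 < M p)
    (hMlim : Tendsto (fun p : ℕ => M p ^ (1 / (p : ℝ))) atTop atTop) (hNpos : ∀ p, 0 < N p)
    {A : ℝ} (hA : 0 < A) (hMN : ∀ p, M p ≤ A ^ p * N p) {t : ℝ} (ht : 0 ≤ t) :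
    omegaM N t ≤ omegaM M (A * t) := by
  rcases ht.eq_or_lt with rfl | ht
  · simp [omegaM]
  have hAt : 0 < A * t := mul_pos hA ht
  rw [omegaM, if_neg ht.ne', omegaM, if_neg hAt.ne']
  refine ciSup_mono (bddAbove_range_log_pow_div hMpos hMlim hAt) fun p => ?_
  refine log_le_log (div_pos (pow_pos ht p) (hNpos p)) ?_
  rw [div_le_div_iff₀ (hNpos p) (hMpos p), mul_pow]
  linarith [mul_le_mul_of_nonneg_left (hMN p) (pow_nonneg ht.le p)]

lemma monotoneOn_omegaM (hpos : ∀ p, 0 < M p)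
    (hlim : Tendsto (fun p : ℕ => M p ^ (1 / (p : ℝ))) atTop atTop) (h0 : M 0 ≤ 1) :
    MonotoneOn (omegaM M) (Set.Ici 0) := by
  intro s hs t ht hst
  rcases (Set.mem_Ici.1 hs).eq_or_lt with rfl | hs
  · simpa [omegaM] using omegaM_nonneg hpos hlim h0 ht
  have hts : 1 ≤ t / s := (one_le_div hs).2 hst
  have h := omegaM_le_omegaM_mul hpos hlim hpos (zero_lt_one.trans_le hts)
    (fun p => le_mul_of_one_le_left (hpos p).le (one_le_pow₀ hts)) hs.le
  rwa [div_mul_cancel₀ _ hs.ne'] at h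

lemma Precsim.exists_le_pow_mul (hMpos : ∀ p, 0 < M p) (hNpos : ∀ p, 0 < N p)
    (h0 : M 0 ≤ N 0) (h : Precsim M N) : ∃ A : ℝ, 0 < A ∧ ∀ p, M p ≤ A ^ p * N p := by
  obtain ⟨A, hA⟩ := h
  refine ⟨max A 1, by positivity, fun p => ?_⟩
  rcases Nat.eq_zero_or_pos p with rfl | hp
  · simpa using h0
  have hMN : 0 ≤ M p / N p := (div_pos (hMpos p) (hNpos p)).le
  have : M p / N p ≤ max A 1 ^ p :=
    calc M p / N p = ((M p / N p) ^ (1 / (p : ℝ))) ^ p := by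
          rw [one_div, rpow_inv_natCast_pow hMN hp.ne']
      _ ≤ max A 1 ^ p :=
          pow_le_pow_left₀ (rpow_nonneg hMN _) ((hA p hp).trans (le_max_left _ _)) p
  rwa [div_le_iff₀ (hNpos p)] at this

end WeightFunction

section Omega1

variable {v w : ℝ → ℝ}

lemma Omega1.exists_iterate (hw : Omega1 w) (hw0 : ∀ t, 0 ≤ t → 0 ≤ w t) :
    ∃ L : ℝ, 1 ≤ L ∧ ∀ (k : ℕ) (t : ℝ), 0 ≤ t → w (2 ^ k * t) + 1 ≤ L ^ k * (w t + 1) := by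
  obtain ⟨L, hL, hwL⟩ := hw
  refine ⟨L + 1, by linarith, fun k => ?_⟩
  induction k with
  | zero => simp
  | succ k ih =>
    intro t ht
    have hkt : 0 ≤ 2 ^ k * t := by positivity
    calc w (2 ^ (k + 1) * t) + 1 = w (2 * (2 ^ k * t)) + 1 := by rw [pow_succ', mul_assoc]
      _ ≤ L * (w (2 ^ k * t) + 1) + 1 := by linarith [hwL _ hkt]
      _ ≤ (L + 1) * (w (2 ^ k * t) + 1) := by linarith [hw0 _ hkt]
      _ ≤ (L + 1) * ((L + 1) ^ k * (w t + 1)) := by gcongr; exact ih t ht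
      _ = (L + 1) ^ (k + 1) * (w t + 1) := by ring

lemma Omega1.of_le_comp_mul (hv : Omega1 v) (hv0 : ∀ t, 0 ≤ t → 0 ≤ v t)
    (hvmono : MonotoneOn v (Set.Ici 0)) {A B : ℝ} (hA : 0 < A) (hB : 0 < B)
    (hwv : ∀ t, 0 ≤ t → w t ≤ v (A * t)) (hvw : ∀ t, 0 ≤ t → v t ≤ w (B * t)) :
    Omega1 w := by
  obtain ⟨L, hL, hvL⟩ := hv.exists_iterate hv0
  obtain ⟨k, hk⟩ := pow_unbounded_of_one_lt (2 * A * B) one_lt_two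
  refine ⟨L ^ k, one_le_pow₀ hL, fun t ht => ?_⟩
  have htB : 0 ≤ t / B := div_nonneg ht hB.le
  have hscale : A * (2 * t) ≤ 2 ^ k * (t / B) := by
    rw [mul_div_assoc', le_div_iff₀ hB]; nlinarith
  calc w (2 * t) ≤ v (A * (2 * t)) := hwv _ (by positivity)
    _ ≤ v (2 ^ k * (t / B)) :=
        hvmono (Set.mem_Ici.2 (by positivity)) (Set.mem_Ici.2 (by positivity)) hscale
    _ ≤ L ^ k * (v (t / B) + 1) := by linarith [hvL k _ htB]
    _ ≤ L ^ k * (w t + 1) := by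
        gcongr; simpa [mul_div_cancel₀ _ hB.ne'] using hvw _ htB

end Omega1

/-- Corollary 3.3: `(ω1)` for associated weight functions is stable under `≈`. -/
theorem stmt6 (M N : ℕ → ℝ) (hM : IsLC M) (hN : IsLC N) (hMN : Approx M N)
    (h : Omega1 (omegaM M)) : Omega1 (omegaM N) := by
  obtain ⟨hMpos, hM0, -, -, hMlim⟩ := hM
  obtain ⟨hNpos, hN0, -, -, hNlim⟩ := hN
  obtain ⟨A, hA, hMA⟩ := hMN.1.exists_le_pow_mul hMpos hNpos (by rw [hM0, hN0])
  obtain ⟨B, hB, hNB⟩ := hMN.2.exists_le_pow_mul hNpos hMpos (by rw [hM0, hN0])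
  exact h.of_le_comp_mul (fun t => omegaM_nonneg hMpos hMlim hM0.le)
    (monotoneOn_omegaM hMpos hMlim hM0.le) hA hB
    (fun t => omegaM_le_omegaM_mul hMpos hMlim hNpos hA hMA)
    (fun t => omegaM_le_omegaM_mul hNpos hNlim hMpos hB hNB)
end

section
/- Let ω : [0,∞) → [0,∞) be nondecreasing with ω(0) ≥ 0. Then the following are equivalent: (i) ω is equivalent to a subadditive function σ : [0,∞) → [0,∞), i.e. there exist σ with σ(s+t) ≤ σ(s) + σ(t) for all s, t ≥ 0 and a constant A ≥ 1 such that ω(t) ≤ A·σ(t) + A and σ(t) ≤ A·ω(t) + A for all t ≥ 0; (ii) there exist C ≥ 1 and D ≥ 1 such that ω(λ·t) ≤ C·λ·ω(t) + D·λ for all λ ≥ 1 and all t ≥ 0; (iii) ω is equivalent (in the same sense as in (i)) to a nondecreasing concave function F : [0,∞) → [0,∞). -/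
open Filter Real Asymptotics

/-!
Subadditivity gives `σ(n t) ≤ n σ(t)`; rounding `λ` up to an integer and using that `ω` is
nondecreasing turns this into `(α0)`. Conversely, under `(α0)` the line through the origin and
the point `(t, C ω(t) + D)`, lifted by `C ω(t) + D`, lies above `ω` on all of `[0, ∞)`. Hence the
infimum of all nonnegative affine majorants of `ω`, which is nondecreasing and concave, is
squeezed between `ω(t)` and `2 (C ω(t) + D)`. Finally, a concave `F ≥ 0` on `[0, ∞)` satisfies
`c F(x) ≤ F(c x)` for `c ∈ [0, 1]`, which makes it subadditive.
-/

open Set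

def WeightEquiv (w s : ℝ → ℝ) : Prop :=
  ∃ A : ℝ, 1 ≤ A ∧ ∀ t : ℝ, 0 ≤ t → w t ≤ A * s t + A ∧ s t ≤ A * w t + A

section Subadditive

variable {s : ℝ → ℝ}

lemma map_natCast_mul_le_of_subadditive
    (hsub : ∀ x : ℝ, 0 ≤ x → ∀ y : ℝ, 0 ≤ y → s (x + y) ≤ s x + s y)
    {t : ℝ} (ht : 0 ≤ t) {n : ℕ} (hn : 1 ≤ n) : s (n * t) ≤ n * s t := by
  induction n, hn using Nat.le_induction with
  | base => simp
  | succ n _ ih =>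
    have hsplit := hsub (n * t) (by positivity) t ht
    push_cast
    rw [add_mul, one_mul] at *
    linarith

lemma alpha0_of_weightEquiv_subadditive {w : ℝ → ℝ} (hmono : MonotoneOn w (Ici 0))
    (hs0 : ∀ t : ℝ, 0 ≤ t → 0 ≤ s t)
    (hsub : ∀ x : ℝ, 0 ≤ x → ∀ y : ℝ, 0 ≤ y → s (x + y) ≤ s x + s y)
    (hequiv : WeightEquiv w s) : Alpha0 w := by
  obtain ⟨A, hA, hAw⟩ := hequiv
  refine ⟨2 * A * A, by nlinarith, 3 * A * A, by nlinarith, fun lam hlam t ht => ?_⟩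
  set n : ℕ := ⌈lam⌉₊
  have hn1 : 1 ≤ n := Nat.one_le_ceil_iff.mpr (by linarith)
  have hlam_le : lam ≤ n := Nat.le_ceil lam
  have hn_le : (n : ℝ) ≤ 2 * lam := by
    linarith [Nat.ceil_lt_add_one (by linarith : (0 : ℝ) ≤ lam)]
  have hst := hs0 t ht
  calc w (lam * t) ≤ w (n * t) :=
        hmono (by simp only [mem_Ici]; positivity) (by simp only [mem_Ici]; positivity)
          (mul_le_mul_of_nonneg_right hlam_le ht)
    _ ≤ A * s (n * t) + A := (hAw _ (by positivity)).1
    _ ≤ A * (n * s t) + A := by gcongr; exact map_natCast_mul_le_of_subadditive hsub ht hn1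
    _ ≤ A * (2 * lam * s t) + A := by gcongr
    _ ≤ A * (2 * lam * (A * w t + A)) + A := by gcongr; exact (hAw t ht).2
    _ ≤ 2 * A * A * lam * w t + 3 * A * A * lam := by
      have : A ≤ A * A * lam := by nlinarith
      linarith

end Subadditive

section AffineMajorant

def affineMajorants (w : ℝ → ℝ) : Set (ℝ × ℝ) :=
  {p | 0 ≤ p.1 ∧ 0 ≤ p.2 ∧ ∀ s : ℝ, 0 ≤ s → w s ≤ p.1 * s + p.2}

noncomputable def affineMajorantInf (w : ℝ → ℝ) (t : ℝ) : ℝ :=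
  ⨅ p : affineMajorants w, p.1.1 * t + p.1.2

variable {w : ℝ → ℝ} {t : ℝ}

lemma affineMajorantInf_le {p : ℝ × ℝ} (hp : p ∈ affineMajorants w) (ht : 0 ≤ t) :
    affineMajorantInf w t ≤ p.1 * t + p.2 := by
  refine ciInf_le ⟨0, ?_⟩ (⟨p, hp⟩ : affineMajorants w)
  rintro _ ⟨⟨q, hq0, hq1, -⟩, rfl⟩
  positivity

lemma le_affineMajorantInf (hne : (affineMajorants w).Nonempty) {c : ℝ}
    (h : ∀ p ∈ affineMajorants w, c ≤ p.1 * t + p.2) : c ≤ affineMajorantInf w t :=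
  have := hne.to_subtype
  le_ciInf fun p => h p.1 p.2

lemma le_affineMajorantInf_self (hne : (affineMajorants w).Nonempty) (ht : 0 ≤ t) :
    w t ≤ affineMajorantInf w t :=
  le_affineMajorantInf hne fun _ hp => hp.2.2 t ht

lemma affineMajorantInf_nonneg (hne : (affineMajorants w).Nonempty) (ht : 0 ≤ t) :
    0 ≤ affineMajorantInf w t :=
  le_affineMajorantInf hne fun _ hp => add_nonneg (mul_nonneg hp.1 ht) hp.2.1

lemma monotoneOn_affineMajorantInf (hne : (affineMajorants w).Nonempty) :
    MonotoneOn (affineMajorantInf w) (Ici 0) := by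
  intro x hx y _ hxy
  refine le_affineMajorantInf hne fun p hp => ?_
  have := affineMajorantInf_le hp hx
  nlinarith [mul_le_mul_of_nonneg_left hxy hp.1]

lemma concaveOn_affineMajorantInf (hne : (affineMajorants w).Nonempty) :
    ConcaveOn ℝ (Ici 0) (affineMajorantInf w) := by
  refine ⟨convex_Ici 0, fun x hx y hy a b ha hb hab => ?_⟩
  refine le_affineMajorantInf hne fun p hp => ?_
  have hx' := mul_le_mul_of_nonneg_left (affineMajorantInf_le hp hx) ha
  have hy' := mul_le_mul_of_nonneg_left (affineMajorantInf_le hp hy) hb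
  simp only [smul_eq_mul]
  linear_combination hx' + hy' + p.2 * hab

end AffineMajorant

section Alpha0

variable {w : ℝ → ℝ} {C D : ℝ}

lemma mem_affineMajorants_of_growth (hpos : ∀ t : ℝ, 0 ≤ t → 0 ≤ w t)
    (hmono : MonotoneOn w (Ici 0)) (hC : 1 ≤ C) (hD : 0 ≤ D)
    (hgrowth : ∀ lam : ℝ, 1 ≤ lam → ∀ t : ℝ, 0 ≤ t → w (lam * t) ≤ C * lam * w t + D * lam)
    {t : ℝ} (ht : 0 < t) :
    ((C * w t + D) / t, C * w t + D) ∈ affineMajorants w := by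
  have hwt := hpos t ht.le
  have hb : 0 ≤ C * w t + D := by positivity
  refine ⟨by positivity, hb, fun s hs => ?_⟩
  rcases le_or_gt s t with hst | hts
  · have := hmono hs ht.le hst
    have : 0 ≤ (C * w t + D) / t * s := by positivity
    nlinarith
  · have h := hgrowth (s / t) ((one_le_div ht).mpr hts.le) t ht.le
    rw [div_mul_cancel₀ s ht.ne'] at h
    have hslope : (C * w t + D) / t * s = C * (s / t) * w t + D * (s / t) := by
      field_simp
    linarith

lemma exists_concave_weightEquiv_of_alpha0 (hpos : ∀ t : ℝ, 0 ≤ t → 0 ≤ w t)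
    (hmono : MonotoneOn w (Ici 0)) (h : Alpha0 w) :
    ∃ F : ℝ → ℝ, (∀ t : ℝ, 0 ≤ t → 0 ≤ F t) ∧ MonotoneOn F (Ici 0) ∧
      ConcaveOn ℝ (Ici 0) F ∧ WeightEquiv w F := by
  obtain ⟨C, hC, D, hD, hgrowth⟩ := h
  have hmem {t : ℝ} (ht : 0 < t) :=
    mem_affineMajorants_of_growth hpos hmono hC (by linarith) hgrowth ht
  have hne : (affineMajorants w).Nonempty := ⟨_, hmem one_pos⟩
  have hF_le {t : ℝ} (ht : 0 < t) : affineMajorantInf w t ≤ 2 * (C * w t + D) := by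
    have := affineMajorantInf_le (hmem ht) ht.le
    rwa [div_mul_cancel₀ _ ht.ne', ← two_mul] at this
  have hw1 := hpos 1 zero_le_one
  set K := 2 * (C * w 1 + D) with hK_def
  have hK : 2 * D ≤ K := by nlinarith
  refine ⟨affineMajorantInf w, fun t => affineMajorantInf_nonneg hne,
    monotoneOn_affineMajorantInf hne, concaveOn_affineMajorantInf hne,
    2 * C + K, by linarith, fun t ht => ⟨?_, ?_⟩⟩
  · have := le_affineMajorantInf_self hne ht
    have := le_mul_of_one_le_left (affineMajorantInf_nonneg hne ht) (by linarith : 1 ≤ 2 * C + K)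
    linarith
  · have hwt := hpos t ht
    have hCw : 0 ≤ C * w t := by positivity
    have hKw : 0 ≤ K * w t := mul_nonneg (by linarith) hwt
    rcases le_or_gt t 1 with ht1 | ht1
    · have := monotoneOn_affineMajorantInf hne ht (mem_Ici.mpr zero_le_one) ht1
      linarith [hF_le one_pos]
    · linarith [hF_le (zero_lt_one.trans ht1)]

end Alpha0

section Concave

variable {F : ℝ → ℝ}

lemma ConcaveOn.mul_le_map_mul (hF : ConcaveOn ℝ (Ici 0) F) (h0 : 0 ≤ F 0) {c x : ℝ}
    (hc0 : 0 ≤ c) (hc1 : c ≤ 1) (hx : 0 ≤ x) : c * F x ≤ F (c * x) := by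
  have h := hF.2 (self_mem_Ici : (0 : ℝ) ∈ Ici 0) hx (sub_nonneg.2 hc1) hc0 (by ring)
  simp only [smul_eq_mul, mul_zero, zero_add] at h
  nlinarith

lemma ConcaveOn.map_add_le (hF : ConcaveOn ℝ (Ici 0) F) (h0 : 0 ≤ F 0) {x y : ℝ}
    (hx : 0 ≤ x) (hy : 0 ≤ y) : F (x + y) ≤ F x + F y := by
  rcases (add_nonneg hx hy).eq_or_lt with hxy | hxy
  · obtain rfl : x = 0 := by linarith
    obtain rfl : y = 0 := by linarith
    simpa using h0
  have hx' := hF.mul_le_map_mul h0 (div_nonneg hx hxy.le)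
    (div_le_one_of_le₀ (by linarith) hxy.le) hxy.le
  have hy' := hF.mul_le_map_mul h0 (div_nonneg hy hxy.le)
    (div_le_one_of_le₀ (by linarith) hxy.le) hxy.le
  rw [div_mul_cancel₀ _ hxy.ne'] at hx' hy'
  have hsum : x / (x + y) * F (x + y) + y / (x + y) * F (x + y) = F (x + y) := by
    field_simp
  linarith

end Concave

/-- Lemma 4.1: equivalence of subadditivity up to equivalence, condition `(α0)`
in the rewritten form, and equivalence to a nondecreasing concave function. -/
theorem stmt10 (w : ℝ → ℝ) (hpos : ∀ t : ℝ, 0 ≤ t → 0 ≤ w t)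
    (hmono : MonotoneOn w (Set.Ici (0 : ℝ))) :
    List.TFAE [
      ∃ s : ℝ → ℝ, (∀ t : ℝ, 0 ≤ t → 0 ≤ s t) ∧
        (∀ x : ℝ, 0 ≤ x → ∀ y : ℝ, 0 ≤ y → s (x + y) ≤ s x + s y) ∧
        ∃ A : ℝ, 1 ≤ A ∧ ∀ t : ℝ, 0 ≤ t → w t ≤ A * s t + A ∧ s t ≤ A * w t + A,
      ∃ C : ℝ, 1 ≤ C ∧ ∃ D : ℝ, 1 ≤ D ∧ ∀ lam : ℝ, 1 ≤ lam → ∀ t : ℝ, 0 ≤ t →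
        w (lam * t) ≤ C * lam * w t + D * lam,
      ∃ F : ℝ → ℝ, (∀ t : ℝ, 0 ≤ t → 0 ≤ F t) ∧
        MonotoneOn F (Set.Ici (0 : ℝ)) ∧ ConcaveOn ℝ (Set.Ici (0 : ℝ)) F ∧
        ∃ A : ℝ, 1 ≤ A ∧ ∀ t : ℝ, 0 ≤ t → w t ≤ A * F t + A ∧ F t ≤ A * w t + A] := by
  tfae_have 1 → 2
  | ⟨s, hs0, hsub, hequiv⟩ => alpha0_of_weightEquiv_subadditive hmono hs0 hsub hequiv
  tfae_have 2 → 3 := exists_concave_weightEquiv_of_alpha0 hpos hmono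
  tfae_have 3 → 1
  | ⟨F, hF0, _, hFconc, hequiv⟩ =>
    ⟨F, hF0, fun _ hx _ hy => hFconc.map_add_le (hF0 0 le_rfl) hx hy, hequiv⟩
  tfae_finish
end

section
/- Let M : ℕ → ℝ be a weight sequence in the class LC, with m_p := M_p/p!, and let M_{ω_M} = {M^{(l)} : l > 0} be the weight matrix associated with ω_M. Then the following are equivalent: (i) M_{ω_M} satisfies the Roumieu root-almost-increasing condition (M_{rai}); (ii) m satisfies the truncated condition: there exist A ≥ 1 and a positive integer C such that (m_p)^{1/p} ≤ A·(m_q)^{1/q} for all p ≥ 1 and all q ≥ C·p. -/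
open Filter Real Asymptotics

/-!
For `M ∈ LC` the Young conjugate satisfies `φ*(n) = log M_n` at integers `n`: by log-convexity,
at `x = log (M_{n+1} / M_n)` the supremum defining `ω_M(eˣ)` is attained at `n`. Since `φ ≥ 0`,
`s ↦ φ*(s) / s` is nondecreasing. Hence `(M^{(l)}_p)^{1/p} = exp (φ*(lp) / (lp))` is
monotone in `lp` alone and equals `M_N^{1/N}` when `lp = N` is an integer. Together with
`N / e ≤ (N!)^{1/N} ≤ N` and the monotonicity of `(N!)^{1/N}`, this turns each condition into the
other: round `x` up to `k` and take `y = Ck` in one direction; in the other, compare `q'` with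
`⌊q' / B⌋` for an integer `B > y`.
-/

open scoped fwdDiff Nat

theorem add_mul_fwdDiff_le_of_monotone {K : Type*} [Field K] [LinearOrder K]
    [IsStrictOrderedRing K] {a : ℕ → K} (ha : Monotone (Δ_[1] a)) (n j : ℕ) :
    a n + ((j : K) - n) * Δ_[1] a n ≤ a j := by
  have up : ∀ k : ℕ, a n + k * Δ_[1] a n ≤ a (n + k) := by
    intro k
    induction k with
    | zero => simp
    | succ k ih =>
      have := ha (Nat.le_add_right n k)
      simp only [fwdDiff, ← add_assoc] at this ih ⊢
      push_cast
      linarith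
  have down : ∀ i k : ℕ, a (i + k) ≤ a i + k * Δ_[1] a (i + k) := by
    intro i k
    induction k with
    | zero => simp
    | succ k ih =>
      have := ha (Nat.le_succ (i + k))
      simp only [fwdDiff, ← add_assoc] at this ih ⊢
      push_cast
      nlinarith
  rcases le_total n j with h | h
  · obtain ⟨k, rfl⟩ := Nat.exists_eq_add_of_le h
    simpa using up k
  · obtain ⟨k, rfl⟩ := Nat.exists_eq_add_of_le h
    have := down j k
    push_cast
    linarith

theorem rpow_one_div_le_rpow_one_div_iff {a b : ℝ} (ha : 0 ≤ a) (hb : 0 ≤ b) {p q : ℕ}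
    (hp : p ≠ 0) (hq : q ≠ 0) :
    a ^ (1 / (p : ℝ)) ≤ b ^ (1 / (q : ℝ)) ↔ a ^ q ≤ b ^ p := by
  have hpq : (0 : ℝ) < p * q := by positivity
  rw [← Real.rpow_le_rpow_iff (by positivity) (by positivity) hpq, ← Real.rpow_mul ha,
    ← Real.rpow_mul hb, show 1 / (p : ℝ) * (p * q) = q by field_simp,
    show 1 / (q : ℝ) * (p * q) = p by field_simp, Real.rpow_natCast, Real.rpow_natCast]

theorem factorial_rpow_one_div_le_self {n : ℕ} (hn : n ≠ 0) :
    (n ! : ℝ) ^ (1 / (n : ℝ)) ≤ n := by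
  have := rpow_one_div_le_rpow_one_div_iff (Nat.cast_nonneg n !) (Nat.cast_nonneg n) hn one_ne_zero
  simpa using this.2 (by rw [pow_one]; exact_mod_cast Nat.factorial_le_pow n)

theorem self_le_exp_one_mul_factorial_rpow_one_div {n : ℕ} (hn : n ≠ 0) :
    (n : ℝ) ≤ Real.exp 1 * (n ! : ℝ) ^ (1 / (n : ℝ)) := by
  have h : (n : ℝ) ^ n ≤ Real.exp 1 ^ n * n ! := by
    rw [← Real.exp_nat_mul, mul_one, ← div_le_iff₀ (by positivity)]
    exact Real.pow_div_factorial_le_exp (n : ℝ) (Nat.cast_nonneg n) n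
  calc (n : ℝ) = ((n : ℝ) ^ n) ^ (1 / (n : ℝ)) := by
        rw [one_div, Real.pow_rpow_inv_natCast (Nat.cast_nonneg n) hn]
    _ ≤ (Real.exp 1 ^ n * n !) ^ (1 / (n : ℝ)) := by gcongr
    _ = Real.exp 1 * (n ! : ℝ) ^ (1 / (n : ℝ)) := by
        rw [Real.mul_rpow (by positivity) (by positivity), one_div,
          Real.pow_rpow_inv_natCast (Real.exp_pos 1).le hn]

theorem factorial_rpow_one_div_le_factorial_rpow_one_div {p q : ℕ} (hp : p ≠ 0)
    (hpq : p ≤ q) :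
    (p ! : ℝ) ^ (1 / (p : ℝ)) ≤ (q ! : ℝ) ^ (1 / (q : ℝ)) := by
  rw [rpow_one_div_le_rpow_one_div_iff (Nat.cast_nonneg _) (Nat.cast_nonneg _) hp (by omega)]
  norm_cast
  calc p ! ^ q = p ! ^ p * p ! ^ (q - p) := by rw [← pow_add, Nat.add_sub_cancel' hpq]
    _ ≤ p ! ^ p * (p ^ p) ^ (q - p) := by gcongr; exact Nat.factorial_le_pow p
    _ = (p ! * p ^ (q - p)) ^ p := by ring
    _ ≤ q ! ^ p := by gcongr; exact Nat.factorial_mul_pow_sub_le_factorial hpq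

theorem factorial_rpow_one_div_le_div_mul {p q : ℕ} (hp : p ≠ 0) (hq : q ≠ 0) :
    (q ! : ℝ) ^ (1 / (q : ℝ)) ≤ q / p * Real.exp 1 * (p ! : ℝ) ^ (1 / (p : ℝ)) :=
  calc (q ! : ℝ) ^ (1 / (q : ℝ)) ≤ q := factorial_rpow_one_div_le_self hq
    _ = q / p * p := by field_simp
    _ ≤ q / p * (Real.exp 1 * (p ! : ℝ) ^ (1 / (p : ℝ))) := by
        gcongr; exact self_le_exp_one_mul_factorial_rpow_one_div hp
    _ = q / p * Real.exp 1 * (p ! : ℝ) ^ (1 / (p : ℝ)) := by ring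

variable {M : ℕ → ℝ}

theorem IsLC.monotone_fwdDiff_log (hM : IsLC M) : Monotone (Δ_[1] fun j => Real.log (M j)) := by
  obtain ⟨hpos, -, -, hlc, -⟩ := hM
  refine monotone_nat_of_le_succ fun j => ?_
  have h := Real.log_le_log (pow_pos (hpos _) 2) (hlc (j + 1) (by omega))
  rw [Real.log_pow, Real.log_mul (hpos _).ne' (hpos _).ne'] at h
  simp only [fwdDiff, Nat.add_sub_cancel] at h ⊢
  push_cast at h
  linarith

theorem IsLC.fwdDiff_log_nonneg (hM : IsLC M) (n : ℕ) :
    0 ≤ Δ_[1] (fun j => Real.log (M j)) n := by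
  refine le_trans ?_ (hM.monotone_fwdDiff_log (Nat.zero_le n))
  obtain ⟨hpos, -, h01, -, -⟩ := hM
  simpa [fwdDiff] using Real.log_le_log (hpos 0) h01

theorem omegaM_exp_s11 (hpos : ∀ p, 0 < M p) (x : ℝ) :
    omegaM M (Real.exp x) = ⨆ j : ℕ, ((j : ℝ) * x - Real.log (M j)) := by
  rw [omegaM, if_neg (Real.exp_ne_zero x)]
  congr 1 with j
  rw [Real.log_div (pow_ne_zero j (Real.exp_ne_zero x)) (hpos j).ne', Real.log_pow, Real.log_exp]

theorem IsLC.bddAbove_range_mul_sub_log_s11 (hM : IsLC M) (x : ℝ) :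
    BddAbove (Set.range fun j : ℕ => (j : ℝ) * x - Real.log (M j)) := by
  obtain ⟨hpos, -, -, -, hlim⟩ := hM
  refine (isBoundedUnder_of_eventually_le (a := 0) ?_).bddAbove_range
  filter_upwards [hlim.eventually_ge_atTop (Real.exp x), eventually_ge_atTop 1] with j hj hj1
  have hj0 : (0 : ℝ) < j := by exact_mod_cast hj1
  have h := Real.log_le_log (Real.exp_pos x) hj
  rw [Real.log_exp, Real.log_rpow (hpos j), one_div, inv_mul_eq_div, le_div_iff₀ hj0] at h
  linarith

theorem IsLC.le_omegaM_exp (hM : IsLC M) (x : ℝ) (j : ℕ) :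
    (j : ℝ) * x - Real.log (M j) ≤ omegaM M (Real.exp x) := by
  rw [omegaM_exp_s11 hM.1]
  exact le_ciSup (hM.bddAbove_range_mul_sub_log_s11 x) j

theorem IsLC.omegaM_exp_nonneg (hM : IsLC M) (x : ℝ) : 0 ≤ omegaM M (Real.exp x) := by
  simpa [hM.2.1] using hM.le_omegaM_exp x 0

theorem IsLC.omegaM_exp_fwdDiff_log (hM : IsLC M) (n : ℕ) :
    omegaM M (Real.exp (Δ_[1] (fun j => Real.log (M j)) n))
      = n * Δ_[1] (fun j => Real.log (M j)) n - Real.log (M n) := by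
  refine le_antisymm ?_ (hM.le_omegaM_exp _ n)
  rw [omegaM_exp_s11 hM.1]
  refine ciSup_le fun j => ?_
  have := add_mul_fwdDiff_le_of_monotone hM.monotone_fwdDiff_log n j
  linarith

theorem IsLC.bddAbove_phiStar_image (hM : IsLC M) (y : ℝ) :
    BddAbove ((fun x => x * y - omegaM M (Real.exp x)) '' Set.Ici 0) := by
  refine ⟨Real.log (M ⌈y⌉₊), ?_⟩
  rintro _ ⟨x, hx, rfl⟩
  have h := hM.le_omegaM_exp x ⌈y⌉₊
  have hx : (0 : ℝ) ≤ x := hx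
  nlinarith [Nat.le_ceil y]

theorem IsLC.le_phiStar (hM : IsLC M) {x : ℝ} (hx : 0 ≤ x) (y : ℝ) :
    x * y - omegaM M (Real.exp x) ≤ phiStar M y :=
  le_csSup (hM.bddAbove_phiStar_image y) ⟨x, hx, rfl⟩

theorem phiStar_le {y c : ℝ} (h : ∀ x, 0 ≤ x → x * y - omegaM M (Real.exp x) ≤ c) :
    phiStar M y ≤ c :=
  csSup_le ⟨_, 0, Set.self_mem_Ici, rfl⟩ fun _ ⟨x, hx, hc⟩ => hc ▸ h x hx

theorem IsLC.phiStar_natCast (hM : IsLC M) (n : ℕ) : phiStar M n = Real.log (M n) := by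
  refine le_antisymm (phiStar_le fun x _ => ?_) ?_
  · linarith [hM.le_omegaM_exp x n]
  · have h := hM.le_phiStar (hM.fwdDiff_log_nonneg n) n
    rw [hM.omegaM_exp_fwdDiff_log] at h
    linarith

theorem IsLC.phiStar_div_le_div (hM : IsLC M) {s t : ℝ} (hs : 0 < s) (hst : s ≤ t) :
    phiStar M s / s ≤ phiStar M t / t := by
  have ht : 0 < t := hs.trans_le hst
  suffices phiStar M s ≤ s / t * phiStar M t by
    calc phiStar M s / s ≤ s / t * phiStar M t / s := by gcongr
      _ = phiStar M t / t := by field_simp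
  refine phiStar_le fun x hx => ?_
  have hω := hM.omegaM_exp_nonneg x
  have hst' : s / t ≤ 1 := (div_le_one ht).2 hst
  calc x * s - omegaM M (Real.exp x) ≤ s / t * (x * t - omegaM M (Real.exp x)) := by
        rw [mul_sub, show s / t * (x * t) = x * s by field_simp]
        nlinarith
    _ ≤ s / t * phiStar M t :=
        mul_le_mul_of_nonneg_left (hM.le_phiStar hx t) (div_nonneg hs.le ht.le)

theorem MMat_rpow_one_div {l : ℝ} (hl : l ≠ 0) {p : ℕ} (hp : p ≠ 0) :
    MMat M l p ^ (1 / (p : ℝ)) = Real.exp (phiStar M (l * p) / (l * p)) := by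
  rw [MMat, ← Real.exp_mul]
  congr 1
  field_simp

theorem IsLC.MMat_rpow_one_div_le (hM : IsLC M) {l l' : ℝ} (hl : 0 < l) {p p' : ℕ}
    (hp : p ≠ 0) (hp' : p' ≠ 0) (h : l * p ≤ l' * p') :
    MMat M l p ^ (1 / (p : ℝ)) ≤ MMat M l' p' ^ (1 / (p' : ℝ)) := by
  have hlp : 0 < l * p := mul_pos hl (by positivity)
  have hl' : 0 < l' := pos_of_mul_pos_left (hlp.trans_le h) (Nat.cast_nonneg p')
  rw [MMat_rpow_one_div hl.ne' hp, MMat_rpow_one_div hl'.ne' hp']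
  exact Real.exp_le_exp.2 (hM.phiStar_div_le_div hlp h)

theorem IsLC.MMat_one (hM : IsLC M) (p : ℕ) : MMat M 1 p = M p := by
  rw [MMat, one_mul, hM.phiStar_natCast, one_div_one, one_mul, Real.exp_log (hM.1 p)]

theorem IsLC.mseq_eq_mMat_one (hM : IsLC M) : mseq M = mMat M 1 := by
  ext p
  rw [mseq, mMat, hM.MMat_one]

theorem mMat_rpow_one_div (l : ℝ) (p : ℕ) :
    mMat M l p ^ (1 / (p : ℝ)) = MMat M l p ^ (1 / (p : ℝ)) / (p ! : ℝ) ^ (1 / (p : ℝ)) :=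
  Real.div_rpow (Real.exp_pos _).le (Nat.cast_nonneg _) _

theorem mMat_rpow_nonneg (l : ℝ) (p : ℕ) (r : ℝ) : 0 ≤ mMat M l p ^ r :=
  Real.rpow_nonneg (div_nonneg (Real.exp_pos _).le (Nat.cast_nonneg _)) r

theorem IsLC.mMat_rpow_one_div_le_mul (hM : IsLC M) {l l' : ℝ} (hl : 0 < l) {p p' : ℕ}
    (hp : p ≠ 0) (hp' : p' ≠ 0) (h : l * p ≤ l' * p') :
    mMat M l p ^ (1 / (p : ℝ)) ≤ p' / p * Real.exp 1 * mMat M l' p' ^ (1 / (p' : ℝ)) := by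
  rw [mMat_rpow_one_div, mMat_rpow_one_div]
  set c : ℝ := p' / p * Real.exp 1
  have hc : 0 < c := by positivity
  calc MMat M l p ^ (1 / (p : ℝ)) / (p ! : ℝ) ^ (1 / (p : ℝ))
      ≤ MMat M l' p' ^ (1 / (p' : ℝ)) / (p ! : ℝ) ^ (1 / (p : ℝ)) := by
        gcongr; exact hM.MMat_rpow_one_div_le hl hp hp' h
    _ = c * MMat M l' p' ^ (1 / (p' : ℝ)) / (c * (p ! : ℝ) ^ (1 / (p : ℝ))) := by
        rw [mul_div_mul_left _ _ hc.ne']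
    _ ≤ c * MMat M l' p' ^ (1 / (p' : ℝ)) / (p' ! : ℝ) ^ (1 / (p' : ℝ)) :=
        div_le_div_of_nonneg_left (mul_nonneg hc.le (Real.rpow_nonneg (Real.exp_pos _).le _))
          (by positivity) (factorial_rpow_one_div_le_div_mul hp hp')
    _ = c * (MMat M l' p' ^ (1 / (p' : ℝ)) / (p' ! : ℝ) ^ (1 / (p' : ℝ))) := mul_div_assoc ..

theorem IsLC.mMat_rpow_one_div_le (hM : IsLC M) {l l' : ℝ} (hl : 0 < l) {p p' : ℕ}
    (hp' : p' ≠ 0) (hpp' : p' ≤ p) (h : l * p ≤ l' * p') :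
    mMat M l p ^ (1 / (p : ℝ)) ≤ mMat M l' p' ^ (1 / (p' : ℝ)) := by
  rw [mMat_rpow_one_div, mMat_rpow_one_div]
  exact div_le_div₀ (Real.rpow_nonneg (Real.exp_pos _).le _)
    (hM.MMat_rpow_one_div_le hl (by omega) hp' h) (by positivity)
    (factorial_rpow_one_div_le_factorial_rpow_one_div hp' hpp')

theorem IsLC.mRai_of_truncated (hM : IsLC M) {A : ℝ} (hA : 1 ≤ A) {C : ℕ} (hC : 1 ≤ C)
    (htr : ∀ p q : ℕ, 1 ≤ p → C * p ≤ q →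
      mseq M p ^ (1 / (p : ℝ)) ≤ A * mseq M q ^ (1 / (q : ℝ))) :
    MRai M := by
  intro x hx
  set k := ⌈x⌉₊
  have hk : 1 ≤ k := Nat.one_le_ceil_iff.2 hx
  refine ⟨k * Real.exp 1 * A, by positivity, (C * k : ℕ), by positivity, fun p q hp hpq => ?_⟩
  have hxk : x * p ≤ 1 * (k * p : ℕ) := by
    push_cast; rw [one_mul]; gcongr; exact Nat.le_ceil x
  rw [hM.mseq_eq_mMat_one] at htr
  calc mMat M x p ^ (1 / (p : ℝ))
      ≤ (k * p : ℕ) / p * Real.exp 1 * mMat M 1 (k * p) ^ (1 / ((k * p : ℕ) : ℝ)) :=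
        hM.mMat_rpow_one_div_le_mul hx (by omega) (by positivity) hxk
    _ ≤ (k * p : ℕ) / p * Real.exp 1 *
          (A * mMat M 1 (C * k * q) ^ (1 / ((C * k * q : ℕ) : ℝ))) := by
        gcongr
        exact htr _ _ (Nat.one_le_iff_ne_zero.2 (by positivity)) (by rw [← mul_assoc]; gcongr)
    _ ≤ (k * p : ℕ) / p * Real.exp 1 * (A * mMat M (C * k : ℕ) q ^ (1 / (q : ℝ))) := by
        gcongr
        exact hM.mMat_rpow_one_div_le one_pos (by omega) (Nat.le_mul_of_pos_left q (by positivity))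
          (by push_cast; rw [one_mul])
    _ = k * Real.exp 1 * A * mMat M (C * k : ℕ) q ^ (1 / (q : ℝ)) := by
        have : (p : ℝ) ≠ 0 := by positivity
        push_cast
        field_simp

theorem IsLC.truncated_of_mRai (hM : IsLC M) (hrai : MRai M) :
    ∃ A : ℝ, 1 ≤ A ∧ ∃ C : ℕ, 1 ≤ C ∧ ∀ p q : ℕ, 1 ≤ p → C * p ≤ q →
      mseq M p ^ (1 / (p : ℝ)) ≤ A * mseq M q ^ (1 / (q : ℝ)) := by
  obtain ⟨C, hC, y, hy, hCy⟩ := hrai 1 one_pos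
  set B := ⌈y⌉₊ + 1
  have hB : 0 < B := Nat.succ_pos _
  refine ⟨max (C * (2 * B * Real.exp 1)) 1, le_max_right _ _, B, hB, fun p q' hp hq' => ?_⟩
  rw [hM.mseq_eq_mMat_one]
  -- `q := ⌊q' / B⌋` still dominates `p`, while `y q ≤ q' ≤ 2 B q`
  set q := q' / B
  have hpq : p ≤ q := (Nat.le_div_iff_mul_le hB).2 (by linarith)
  have hq : q ≠ 0 := by omega
  have hq'0 : q' ≠ 0 := by rintro rfl; simp [q] at hq
  have hyq : y * q ≤ 1 * q' := by
    rw [one_mul]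
    calc y * q ≤ B * q := by gcongr; exact (Nat.le_ceil y).trans (by simp [B])
      _ ≤ q' := by rw [mul_comm]; exact_mod_cast Nat.div_mul_le_self q' B
  have hq'q : (q' : ℝ) / q ≤ 2 * B := by
    rw [div_le_iff₀ (by positivity)]
    have : q' < B * (q + 1) := Nat.lt_mul_div_succ q' hB
    have : B * (q + 1) ≤ 2 * B * q := by nlinarith [Nat.one_le_iff_ne_zero.2 hq]
    exact_mod_cast (by omega : q' ≤ 2 * B * q)
  calc mMat M 1 p ^ (1 / (p : ℝ)) ≤ C * mMat M y q ^ (1 / (q : ℝ)) := hCy p q hp hpq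
    _ ≤ C * (q' / q * Real.exp 1 * mMat M 1 q' ^ (1 / (q' : ℝ))) := by
        gcongr; exact hM.mMat_rpow_one_div_le_mul hy hq hq'0 hyq
    _ ≤ C * (2 * B * Real.exp 1 * mMat M 1 q' ^ (1 / (q' : ℝ))) := by
        gcongr; exact mMat_rpow_nonneg _ _ _
    _ ≤ max (C * (2 * B * Real.exp 1)) 1 * mMat M 1 q' ^ (1 / (q' : ℝ)) := by
        rw [← mul_assoc]
        exact mul_le_mul_of_nonneg_right (le_max_left _ _) (mMat_rpow_nonneg _ _ _)

/-- Lemma 4.2: `(M_{rai})` for the matrix associated with `ω_M` is equivalent to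
the truncated root-almost-increasing condition for `m`. -/
theorem stmt11 (M : ℕ → ℝ) (hM : IsLC M) :
    MRai M ↔
    (∃ A : ℝ, 1 ≤ A ∧ ∃ C : ℕ, 1 ≤ C ∧ ∀ p q : ℕ, 1 ≤ p → C * p ≤ q →
      (mseq M p) ^ (1 / (p : ℝ)) ≤ A * (mseq M q) ^ (1 / (q : ℝ))) :=
  ⟨hM.truncated_of_mRai, fun ⟨_, hA, _, hC, htr⟩ => hM.mRai_of_truncated hA hC htr⟩
end
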